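/- For the infinite rooted k-ary tree T with k ≥ 2, s > 1, s' = s/(s−1), and α = 1/(s'+1), the quantities in the abstract weighted theorem satisfy E_T^w(s,r,α) ≤ c_s k^{−r/(s'+1)} and S_T(r) ≃ k^r, whence E_T^w(s,r,α)^{1/(1−α)} S_T(r)^{(1/2)·α/(1−α)} 2^{n(1/2)·α/(1−α)} ≲ c_s (2^n/k^r)^{1/(2s')}, recovering the Fefferman–Stein weak-type estimate for the k-ary tree from the abstract result. -/

import Mathlib

open scoped ENNReal NNReal BigOperators

noncomputable section

/-- Vertices of the infinite rooted `k`-ary tree: finite words over `Fin k`. -/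
abbrev V (k : ℕ) := List (Fin k)

/-- Length of the longest common prefix (depth of the deepest common ancestor). -/
def lcpLen {k : ℕ} : List (Fin k) → List (Fin k) → ℕ
  | a :: as, b :: bs => if a = b then lcpLen as bs + 1 else 0
  | _, _ => 0

/-- Graph distance on the infinite rooted `k`-ary tree. -/
def tdist {k : ℕ} (x y : V k) : ℕ :=
  (x.length - lcpLen x y) + (y.length - lcpLen x y)

/-- Sphere of radius `r` centered at `x`. -/
def sph {k : ℕ} (x : V k) (r : ℕ) : Set (V k) := {y | tdist x y = r}

/-- Closed ball of radius `r` centered at `x`. -/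
def ball {k : ℕ} (x : V k) (r : ℕ) : Set (V k) := {y | tdist x y ≤ r}

def sphCard {k : ℕ} (x : V k) (r : ℕ) : ℝ≥0∞ := ((sph x r).ncard : ℝ≥0∞)
def ballCard {k : ℕ} (x : V k) (r : ℕ) : ℝ≥0∞ := ((ball x r).ncard : ℝ≥0∞)

/-- `w(A) = Σ_{y ∈ A} w(y)`, the weighted (counting) measure of `A`. -/
def wsum {k : ℕ} (w : V k → ℝ≥0∞) (A : Set (V k)) : ℝ≥0∞ := ∑' y : A, w ↑y

/-- Spherical average `A_r° f (x)`. -/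
def sphAvg {k : ℕ} (f : V k → ℝ≥0∞) (x : V k) (r : ℕ) : ℝ≥0∞ :=
  wsum f (sph x r) / sphCard x r

/-- Spherical maximal operator `M°`. -/
def Msph {k : ℕ} (f : V k → ℝ≥0∞) (x : V k) : ℝ≥0∞ := ⨆ r : ℕ, sphAvg f x r

/-- Centered Hardy–Littlewood maximal operator `M`. -/
def Mball {k : ℕ} (f : V k → ℝ≥0∞) (x : V k) : ℝ≥0∞ :=
  ⨆ r : ℕ, wsum f (ball x r) / ballCard x r

/-- `|f|` of a real-valued function, as an `ℝ≥0∞`-valued function. -/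
def absE {k : ℕ} (f : V k → ℝ) : V k → ℝ≥0∞ := fun y => ENNReal.ofReal |f y|

/-- `M_s w = (M(w^s))^{1/s}` (centered version). -/
def MsBall {k : ℕ} (s : ℝ) (w : V k → ℝ≥0∞) (x : V k) : ℝ≥0∞ :=
  (Mball (fun y => w y ^ s) x) ^ (1 / s)

/-- `M_s° w = (M°(w^s))^{1/s}` (spherical version). -/
def MsSph {k : ℕ} (s : ℝ) (w : V k → ℝ≥0∞) (x : V k) : ℝ≥0∞ :=
  (Msph (fun y => w y ^ s) x) ^ (1 / s)

/-- `S_T(r) = sup_x |S(x,r)|` on the infinite rooted `k`-ary tree. -/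
def STk (k : ℕ) (r : ℕ) : ℝ≥0∞ := ⨆ x : V k, sphCard x r

/-- `E_T^w(s,r,α)` on the infinite rooted `k`-ary tree. -/
def ETk (k : ℕ) (w : V k → ℝ≥0∞) (s : ℝ) (r : ℕ) (a : ℝ) : ℝ≥0∞ :=
  ⨆ (E : Finset (V k)) (F : Finset (V k)),
    (∑ x ∈ E, wsum w (↑F ∩ sph x r) / sphCard x r) /
      ((wsum w ↑F) ^ a * (∑ x ∈ E, MsSph s w x) ^ (1 - a))

/-!
A geodesic from `x` to `y` climbs `r - d` edges to the deepest common ancestor and then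
descends `d` edges. For fixed `x` there are at most `k ^ d` such `y`, and for fixed `y` at most
`k ^ (r - d)` such `x`. So the pairs with descent `d` contribute at most `k ^ (r - d) w(F)`
(count the centres), and, by Hölder on each sphere, at most
`(2 k ^ r) ^ (1/s) k ^ (d/s') Σ_{x ∈ E} M_s° w(x)` (count the points). The first bound decays
and the second grows geometrically in `d`, while their geometric mean with weights `1/(s'+1)`,
`s'/(s'+1)` is independent of `d`; hence the sum over `d` of the minimum is a constant times that
mean. This is the combinatorial lemma, and dividing by `|S(x,r)| ≥ k ^ r` gives
`E_T^w ≲ k ^ (-r/(s'+1))`. The rest is exponent arithmetic with `S_T(r) ≤ 2 k ^ r`.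
-/

open Finset

theorem sum_le_inv_one_sub_mul_of_le_pow_mul {ι : Type*} {S : Finset ι} {f : ι → ℕ}
    (hf : Set.InjOn f S) {a : ι → ℝ≥0∞} {ρ A : ℝ≥0∞} (h : ∀ i ∈ S, a i ≤ ρ ^ f i * A) :
    ∑ i ∈ S, a i ≤ (1 - ρ)⁻¹ * A :=
  calc ∑ i ∈ S, a i ≤ ∑ i ∈ S, ρ ^ f i * A := sum_le_sum h
    _ = (∑ n ∈ S.image f, ρ ^ n) * A := by rw [sum_image hf, sum_mul]
    _ ≤ (∑' n, ρ ^ n) * A := by gcongr; exact ENNReal.sum_le_tsum _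
    _ = (1 - ρ)⁻¹ * A := by rw [ENNReal.tsum_geometric]

/-- Split at the crossing point of `a` and `c`: on either side the smaller sequence is geometric
away from it. -/
theorem sum_min_le_of_geometric {n : ℕ} {a c : ℕ → ℝ≥0∞} {ρ V : ℝ≥0∞}
    (ha : ∀ i j, i ≤ j → j < n → a j ≤ ρ ^ (j - i) * a i)
    (hc : ∀ i j, i ≤ j → j < n → c i ≤ ρ ^ (j - i) * c j)
    (hV : ∀ d < n, min (a d) (c d) ≤ V) :
    ∑ d ∈ range n, min (a d) (c d) ≤ 2 * (1 - ρ)⁻¹ * V := by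
  rw [← sum_filter_add_sum_filter_not (range n) (fun d => a d ≤ c d), two_mul, add_mul]
  refine add_le_add ?_ ?_
  · set S := (range n).filter fun d => a d ≤ c d
    rcases S.eq_empty_or_nonempty with hS | hS
    · simp [hS]
    have hm := mem_filter.1 (S.min'_mem hS)
    refine sum_le_inv_one_sub_mul_of_le_pow_mul (f := fun d => d - S.min' hS)
      (fun d hd d' hd' hdd' => ?_) fun d hd => ?_
    · have := S.min'_le d hd
      have := S.min'_le d' hd'
      simp only at hdd'
      omega
    calc min (a d) (c d) ≤ a d := min_le_left _ _
      _ ≤ ρ ^ (d - S.min' hS) * a (S.min' hS) :=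
          ha _ d (S.min'_le d hd) (mem_range.1 (mem_filter.1 hd).1)
      _ ≤ ρ ^ (d - S.min' hS) * V := by
          rw [← min_eq_left hm.2]
          gcongr
          exact hV _ (mem_range.1 hm.1)
  · set S := (range n).filter fun d => ¬a d ≤ c d
    rcases S.eq_empty_or_nonempty with hS | hS
    · simp [hS]
    have hm := mem_filter.1 (S.max'_mem hS)
    refine sum_le_inv_one_sub_mul_of_le_pow_mul (f := fun d => S.max' hS - d)
      (fun d hd d' hd' hdd' => ?_) fun d hd => ?_
    · have := S.le_max' d hd
      have := S.le_max' d' hd'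
      simp only at hdd'
      omega
    calc min (a d) (c d) ≤ c d := min_le_right _ _
      _ ≤ ρ ^ (S.max' hS - d) * c (S.max' hS) :=
          hc d _ (S.le_max' d hd) (mem_range.1 hm.1)
      _ ≤ ρ ^ (S.max' hS - d) * V := by
          rw [← min_eq_right (not_le.1 hm.2).le]
          gcongr
          exact hV _ (mem_range.1 hm.1)

theorem min_le_rpow_mul_rpow (a b : ℝ≥0∞) {α : ℝ} (h0 : 0 ≤ α) (h1 : α ≤ 1) :
    min a b ≤ a ^ α * b ^ (1 - α) :=
  calc min a b = min a b ^ α * min a b ^ (1 - α) := by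
        rw [← ENNReal.rpow_add_of_nonneg _ _ h0 (sub_nonneg.2 h1), add_sub_cancel,
          ENNReal.rpow_one]
    _ ≤ a ^ α * b ^ (1 - α) :=
        mul_le_mul' (ENNReal.rpow_le_rpow (min_le_left _ _) h0)
          (ENNReal.rpow_le_rpow (min_le_right _ _) (sub_nonneg.2 h1))

/-- The terms `κ ^ (r - d) * W` and `K * (κ ^ d) ^ (1 / q) * B` have a geometric mean with weights
`1 / (q + 1)` and `q / (q + 1)` that does not depend on `d`. -/
theorem sum_min_pow_le {κ : ℝ≥0∞} (hκ : 2 ≤ κ) {q : ℝ} (hq : 1 ≤ q) (K W B : ℝ≥0∞) (r : ℕ) :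
    ∑ d ∈ range (r + 1), min (κ ^ (r - d) * W) (K * (κ ^ d) ^ (1 / q) * B) ≤
      2 * (1 - ((2 : ℝ≥0∞) ^ (1 / q))⁻¹)⁻¹ *
        ((κ ^ r) ^ (1 / (q + 1)) * K ^ (1 - 1 / (q + 1)) * W ^ (1 / (q + 1)) *
          B ^ (1 - 1 / (q + 1))) := by
  set α : ℝ := 1 / (q + 1)
  have hα0 : 0 ≤ α := by positivity
  have hα1 : 0 ≤ 1 - α := by rw [sub_nonneg, div_le_one (by linarith)]; linarith
  have hq0 : 0 ≤ 1 / q := by positivity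
  set l : ℝ≥0∞ := 2 ^ (1 / q)
  have hl : 1 ≤ l⁻¹ * κ ^ (1 / q) := by
    rw [← ENNReal.inv_mul_cancel (a := l) (by positivity)
      (ENNReal.rpow_ne_top_of_nonneg hq0 (by simp))]
    exact mul_le_mul' le_rfl (ENNReal.rpow_le_rpow hκ hq0)
  have hκq : κ ^ (1 / q) ≤ κ := by
    simpa using ENNReal.rpow_le_rpow_of_exponent_le (one_le_two.trans hκ)
      ((div_le_one (by linarith)).2 hq)
  refine sum_min_le_of_geometric (fun i j hij hj => ?_) (fun i j hij hj => ?_) fun d hd => ?_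
  · have hsplit : r - i = (j - i) + (r - j) := by omega
    calc κ ^ (r - j) * W = 1 * (κ ^ (r - j) * W) := (one_mul _).symm
      _ ≤ (l⁻¹ * κ) ^ (j - i) * (κ ^ (r - j) * W) := by
          gcongr; exact one_le_pow₀ (hl.trans (by gcongr))
      _ = l⁻¹ ^ (j - i) * (κ ^ (r - i) * W) := by rw [hsplit, pow_add, mul_pow]; ring
  · have hsplit : (κ ^ j) ^ (1 / q) = (κ ^ i) ^ (1 / q) * (κ ^ (1 / q)) ^ (j - i) := by
      conv_lhs => rw [← Nat.add_sub_cancel' hij]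
      rw [pow_add, ENNReal.mul_rpow_of_nonneg _ _ hq0, ← ENNReal.rpow_natCast_mul κ (j - i),
        mul_comm ((j - i : ℕ) : ℝ), ENNReal.rpow_mul_natCast, mul_comm]
    calc K * (κ ^ i) ^ (1 / q) * B = K * (κ ^ i) ^ (1 / q) * B * 1 := (mul_one _).symm
      _ ≤ K * (κ ^ i) ^ (1 / q) * B * (l⁻¹ * κ ^ (1 / q)) ^ (j - i) := by
          gcongr; exact one_le_pow₀ hl
      _ = l⁻¹ ^ (j - i) * (K * (κ ^ j) ^ (1 / q) * B) := by rw [hsplit, mul_pow]; ring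
  · have hexp : 1 / q * (1 - α) = α := by
      simp only [α]; field_simp; ring
    refine (min_le_rpow_mul_rpow _ _ hα0 (by linarith)).trans_eq ?_
    calc (κ ^ (r - d) * W) ^ α * (K * (κ ^ d) ^ (1 / q) * B) ^ (1 - α)
        = (κ ^ (r - d)) ^ α * (κ ^ d) ^ (1 / q * (1 - α)) * K ^ (1 - α) * W ^ α *
            B ^ (1 - α) := by
          simp only [ENNReal.mul_rpow_of_nonneg _ _ hα0, ENNReal.mul_rpow_of_nonneg _ _ hα1,
            ← ENNReal.rpow_mul]
          ring
      _ = (κ ^ r) ^ α * K ^ (1 - α) * W ^ α * B ^ (1 - α) := by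
          rw [hexp, ← ENNReal.mul_rpow_of_nonneg _ _ hα0, pow_sub_mul_pow κ (by omega)]

section KaryTree

variable {k : ℕ}

theorem lcpLen_comm : ∀ x y : V k, lcpLen x y = lcpLen y x
  | [], [] | [], _ :: _ | _ :: _, [] => rfl
  | a :: as, b :: bs => by
    by_cases h : a = b
    · subst h; simp [lcpLen, lcpLen_comm as bs]
    · simp [lcpLen, h, Ne.symm h]

theorem lcpLen_le_length_left : ∀ x y : V k, lcpLen x y ≤ x.length
  | [], _ | _ :: _, [] => by simp [lcpLen]
  | a :: as, b :: bs => by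
    by_cases h : a = b
    · simpa [lcpLen, h] using lcpLen_le_length_left as bs
    · simp [lcpLen, h]

theorem lcpLen_le_length_right (x y : V k) : lcpLen x y ≤ y.length :=
  lcpLen_comm x y ▸ lcpLen_le_length_left y x

theorem take_lcpLen_eq : ∀ x y : V k, x.take (lcpLen x y) = y.take (lcpLen x y)
  | [], _ | _ :: _, [] => by simp [lcpLen]
  | a :: as, b :: bs => by
    by_cases h : a = b
    · subst h; simp [lcpLen, take_lcpLen_eq as bs]
    · simp [lcpLen, h]

theorem lcpLen_append_self : ∀ x l : V k, lcpLen x (x ++ l) = x.length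
  | [], l => by cases l <;> rfl
  | a :: as, l => by simp [lcpLen, lcpLen_append_self as l]

/-- The number of downward steps on the geodesic from `x` to `y`. -/
def descent (x y : V k) : ℕ := y.length - lcpLen x y

theorem descent_le_of_tdist_eq {x y : V k} {r : ℕ} (h : tdist x y = r) : descent x y ≤ r := by
  unfold tdist at h; unfold descent; omega

def wordsOfLength (k t : ℕ) : Finset (V k) :=
  univ.map ⟨List.Vector.toList (α := Fin k) (n := t), List.Vector.toList_injective⟩

theorem mem_wordsOfLength {t : ℕ} {l : V k} : l ∈ wordsOfLength k t ↔ l.length = t := by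
  simp only [wordsOfLength, mem_map, mem_univ, true_and, Function.Embedding.coeFn_mk]
  exact ⟨fun ⟨v, hv⟩ => hv ▸ v.toList_length, fun h => ⟨⟨l, h⟩, rfl⟩⟩

theorem card_wordsOfLength (t : ℕ) : #(wordsOfLength k t) = k ^ t := by
  rw [wordsOfLength, card_map, card_univ, card_vector, Fintype.card_fin]

/-- A word `y` is determined by `x`, `lcpLen x y` and the part of `y` below the common prefix. -/
theorem card_filter_lcpLen_le (x : V k) (G : Finset (V k)) (m t : ℕ) :
    #(G.filter fun y => lcpLen x y = m ∧ y.length = m + t) ≤ k ^ t := by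
  rw [← card_wordsOfLength t]
  refine card_le_card_of_injOn (fun y => y.drop m) (fun y hy => ?_) (fun y hy z hz hyz => ?_)
  · simp only [coe_filter, Set.mem_ofPred_eq] at hy
    simp [mem_wordsOfLength, hy.2.2]
  · simp only [coe_filter, Set.mem_ofPred_eq] at hy hz
    have hprefix : ∀ u, lcpLen x u = m → u.take m = x.take m := fun u hu => by
      subst hu; exact (take_lcpLen_eq x u).symm
    rw [← List.take_append_drop m y, ← List.take_append_drop m z, hprefix y hy.2.1,
      hprefix z hz.2.1]
    exact congrArg _ hyz

theorem card_filter_tdist_descent_le (x : V k) (G : Finset (V k)) (r d : ℕ) :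
    #(G.filter fun y => tdist x y = r ∧ descent x y = d) ≤ k ^ d := by
  refine (card_le_card (monotone_filter_right G fun y _ ⟨hr, hd⟩ => ?_)).trans
    (card_filter_lcpLen_le x G (x.length - (r - d)) d)
  have := lcpLen_le_length_left x y
  have := lcpLen_le_length_right x y
  unfold tdist at hr; unfold descent at hd
  constructor <;> omega

theorem card_filter_tdist_descent_le_pow_sub (y : V k) (G : Finset (V k)) (r d : ℕ) :
    #(G.filter fun x => tdist x y = r ∧ descent x y = d) ≤ k ^ (r - d) := by
  refine (card_le_card (monotone_filter_right G fun x _ ⟨hr, hd⟩ => ?_)).trans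
    (card_filter_lcpLen_le y G (y.length - d) (r - d))
  have := lcpLen_le_length_left x y
  have := lcpLen_le_length_right x y
  have := lcpLen_comm x y
  unfold tdist at hr; unfold descent at hd
  constructor <;> omega

theorem sph_finite (x : V k) (r : ℕ) : (sph x r).Finite :=
  (List.finite_length_le (Fin k) (x.length + r)).subset fun y hy => by
    have := lcpLen_le_length_left x y
    simp only [sph, tdist, Set.mem_ofPred_eq] at hy
    simp only [Set.mem_ofPred_eq]
    omega

theorem ncard_sph_le (hk : 2 ≤ k) (x : V k) (r : ℕ) : (sph x r).ncard ≤ 2 * k ^ r := by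
  set S := (sph_finite x r).toFinset
  have hS : ∀ y ∈ S, tdist x y = r := fun y hy => (sph_finite x r).mem_toFinset.1 hy
  calc (sph x r).ncard = #S := Set.ncard_eq_toFinset_card _ _
    _ = ∑ d ∈ range (r + 1), #(S.filter fun y => descent x y = d) :=
        card_eq_sum_card_fiberwise fun y hy =>
          mem_range.2 (Nat.lt_succ_of_le (descent_le_of_tdist_eq (hS y hy)))
    _ ≤ ∑ d ∈ range (r + 1), k ^ d := sum_le_sum fun d _ =>
        (card_le_card (monotone_filter_right S fun y hy hd => ⟨hS y hy, hd⟩)).trans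
          (card_filter_tdist_descent_le x S r d)
    _ ≤ 2 * k ^ r := by
        rw [sum_range_succ, two_mul]
        exact Nat.add_le_add_right (Nat.geomSum_lt hk fun _ => mem_range.1).le _

theorem pow_le_ncard_sph (x : V k) (r : ℕ) : k ^ r ≤ (sph x r).ncard := by
  rw [← card_wordsOfLength r, Set.ncard_eq_toFinset_card _ (sph_finite x r),
    ← card_map ⟨(x ++ ·), List.append_right_injective x⟩]
  refine card_le_card fun y hy => ?_
  obtain ⟨l, hl, rfl⟩ := mem_map.1 hy
  rw [Set.Finite.mem_toFinset]
  show tdist x (x ++ l) = r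
  rw [tdist, lcpLen_append_self, List.length_append, mem_wordsOfLength.1 hl]
  omega

theorem pow_le_sphCard (x : V k) (r : ℕ) : (k : ℝ≥0∞) ^ r ≤ sphCard x r := by
  rw [sphCard]; exact_mod_cast pow_le_ncard_sph x r

theorem sphCard_le (hk : 2 ≤ k) (x : V k) (r : ℕ) : sphCard x r ≤ 2 * (k : ℝ≥0∞) ^ r := by
  rw [sphCard]; exact_mod_cast ncard_sph_le hk x r

theorem pow_le_STk (k r : ℕ) : (k : ℝ≥0∞) ^ r ≤ STk k r :=
  (pow_le_sphCard [] r).trans (le_iSup (sphCard · r) [])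

theorem STk_le (hk : 2 ≤ k) (r : ℕ) : STk k r ≤ 2 * (k : ℝ≥0∞) ^ r :=
  iSup_le (sphCard_le hk · r)

theorem wsum_coe_finset (w : V k → ℝ≥0∞) (G : Finset (V k)) : wsum w ↑G = ∑ y ∈ G, w y :=
  G.tsum_subtype w

theorem wsum_mono (w : V k → ℝ≥0∞) {A B : Set (V k)} (h : A ⊆ B) : wsum w A ≤ wsum w B :=
  ENNReal.tsum_mono_subtype w h

theorem wsum_sph_le_sphCard_mul_Msph (hk : k ≠ 0) (f : V k → ℝ≥0∞) (x : V k) (r : ℕ) :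
    wsum f (sph x r) ≤ sphCard x r * Msph f x := by
  have hcard : sphCard x r ≠ 0 :=
    (pow_ne_zero r (Nat.cast_ne_zero.2 hk)).bot_lt.trans_le (pow_le_sphCard x r) |>.ne'
  calc wsum f (sph x r) = sphCard x r * sphAvg f x r :=
        (ENNReal.mul_div_cancel hcard (ENNReal.natCast_ne_top _)).symm
    _ ≤ sphCard x r * Msph f x := by gcongr; exact le_iSup (sphAvg f x) r

theorem sum_wsum_inter_sph_eq (w : V k → ℝ≥0∞) (E F : Finset (V k)) (r : ℕ) :
    ∑ x ∈ E, wsum w (↑F ∩ sph x r) =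
      ∑ d ∈ range (r + 1), ∑ x ∈ E,
        ∑ y ∈ F.filter (fun y => tdist x y = r ∧ descent x y = d), w y := by
  rw [sum_comm]
  refine sum_congr rfl fun x _ => ?_
  have hF : (↑F ∩ sph x r : Set (V k)) = ↑(F.filter fun y => tdist x y = r) := by
    ext y; simp [sph]
  rw [hF, wsum_coe_finset, ← sum_fiberwise_of_maps_to (g := descent x) fun y hy =>
    mem_range.2 (Nat.lt_succ_of_le (descent_le_of_tdist_eq (mem_filter.1 hy).2))]
  simp only [filter_filter]

theorem sum_sum_filter_le_pow_mul_wsum (w : V k → ℝ≥0∞) (E F : Finset (V k)) (r d : ℕ) :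
    ∑ x ∈ E, ∑ y ∈ F.filter (fun y => tdist x y = r ∧ descent x y = d), w y ≤
      (k : ℝ≥0∞) ^ (r - d) * wsum w ↑F := by
  rw [sum_comm' (s' := fun y => E.filter fun x => tdist x y = r ∧ descent x y = d) (t' := F)
    fun x y => by simp only [mem_filter]; tauto, wsum_coe_finset, mul_sum]
  refine sum_le_sum fun y _ => ?_
  rw [sum_const, nsmul_eq_mul]
  gcongr
  exact_mod_cast card_filter_tdist_descent_le_pow_sub y E r d

theorem sum_filter_le_mul_MsSph (hk : 2 ≤ k) {p q : ℝ} (hpq : p.HolderConjugate q)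
    (w : V k → ℝ≥0∞) (F : Finset (V k)) (x : V k) (r d : ℕ) :
    ∑ y ∈ F.filter (fun y => tdist x y = r ∧ descent x y = d), w y ≤
      (2 * (k : ℝ≥0∞) ^ r) ^ (1 / p) * ((k : ℝ≥0∞) ^ d) ^ (1 / q) * MsSph p w x := by
  set G := F.filter fun y => tdist x y = r ∧ descent x y = d
  have hHolder := ENNReal.inner_le_Lp_mul_Lq G (fun _ => 1) w hpq.symm
  simp only [one_mul, ENNReal.one_rpow, sum_const, nsmul_eq_mul, mul_one] at hHolder
  have hcard : (#G : ℝ≥0∞) ≤ (k : ℝ≥0∞) ^ d := by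
    exact_mod_cast card_filter_tdist_descent_le x F r d
  have hpow : ∑ y ∈ G, w y ^ p ≤ 2 * (k : ℝ≥0∞) ^ r * Msph (fun y => w y ^ p) x :=
    calc ∑ y ∈ G, w y ^ p = wsum (fun y => w y ^ p) ↑G := (wsum_coe_finset _ _).symm
      _ ≤ wsum (fun y => w y ^ p) (sph x r) := wsum_mono _ fun y hy => (mem_filter.1 hy).2.1
      _ ≤ sphCard x r * Msph (fun y => w y ^ p) x :=
          wsum_sph_le_sphCard_mul_Msph (by omega) _ x r
      _ ≤ 2 * (k : ℝ≥0∞) ^ r * Msph (fun y => w y ^ p) x := by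
          gcongr; exact sphCard_le hk x r
  calc ∑ y ∈ G, w y ≤ (#G : ℝ≥0∞) ^ (1 / q) * (∑ y ∈ G, w y ^ p) ^ (1 / p) := hHolder
    _ ≤ ((k : ℝ≥0∞) ^ d) ^ (1 / q) *
          (2 * (k : ℝ≥0∞) ^ r * Msph (fun y => w y ^ p) x) ^ (1 / p) :=
        mul_le_mul' (ENNReal.rpow_le_rpow hcard hpq.symm.one_div_nonneg)
          (ENNReal.rpow_le_rpow hpow hpq.one_div_nonneg)
    _ = (2 * (k : ℝ≥0∞) ^ r) ^ (1 / p) * ((k : ℝ≥0∞) ^ d) ^ (1 / q) * MsSph p w x := by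
        rw [ENNReal.mul_rpow_of_nonneg _ _ hpq.one_div_nonneg, MsSph]; ring

/-- The constant `c_s` of the spherical estimate, in terms of the conjugate exponent `q = s'`. -/
def sphericalConst (q : ℝ) : ℝ≥0∞ := 4 * (1 - ((2 : ℝ≥0∞) ^ (1 / q))⁻¹)⁻¹

theorem sphericalConst_ne_top {q : ℝ} (hq : 0 < q) : sphericalConst q ≠ ⊤ := by
  have h : ((2 : ℝ≥0∞) ^ (1 / q))⁻¹ < 1 :=
    ENNReal.inv_lt_one.2 (ENNReal.one_lt_rpow (by norm_num) (by positivity))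
  exact ENNReal.mul_ne_top (by simp) (ENNReal.inv_ne_top.2 (tsub_pos_of_lt h).ne')

theorem sum_wsum_inter_sph_le (hk : 2 ≤ k) {p q : ℝ} (hpq : p.HolderConjugate q)
    (w : V k → ℝ≥0∞) (E F : Finset (V k)) (r : ℕ) :
    ∑ x ∈ E, wsum w (↑F ∩ sph x r) ≤
      sphericalConst q * ((k : ℝ≥0∞) ^ r) ^ (1 - 1 / (q + 1)) * wsum w ↑F ^ (1 / (q + 1)) *
        (∑ x ∈ E, MsSph p w x) ^ (1 - 1 / (q + 1)) := by
  set κ : ℝ≥0∞ := (k : ℝ≥0∞)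
  set α : ℝ := 1 / (q + 1)
  set K := (2 * κ ^ r) ^ (1 / p)
  set W := wsum w ↑F
  set B := ∑ x ∈ E, MsSph p w x
  have hq : 1 < q := hpq.symm.lt
  have hα0 : 0 ≤ α := by positivity
  have hexp : 1 / p * (1 - α) = 1 - 2 * α := by
    have h1p : 1 / p = 1 - 1 / q := by
      rw [one_div, one_div]; linarith [hpq.inv_add_inv_eq_one]
    rw [h1p]; simp only [α]; field_simp; ring
  have hexp0 : 0 ≤ 1 - 2 * α := by
    simp only [α]; rw [sub_nonneg, ← mul_div_assoc, div_le_one (by linarith)]; linarith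
  have hK : (κ ^ r) ^ α * K ^ (1 - α) ≤ 2 * (κ ^ r) ^ (1 - α) :=
    calc (κ ^ r) ^ α * K ^ (1 - α) = 2 ^ (1 - 2 * α) * (κ ^ r) ^ (α + (1 - 2 * α)) := by
          rw [← ENNReal.rpow_mul, hexp, ENNReal.mul_rpow_of_nonneg _ _ hexp0,
            ENNReal.rpow_add_of_nonneg _ _ hα0 hexp0]
          ring
      _ ≤ 2 * (κ ^ r) ^ (1 - α) := by
          rw [show α + (1 - 2 * α) = 1 - α by ring]
          gcongr
          simpa using
            ENNReal.rpow_le_rpow_of_exponent_le one_le_two (by linarith : 1 - 2 * α ≤ 1)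
  calc ∑ x ∈ E, wsum w (↑F ∩ sph x r)
      ≤ ∑ d ∈ range (r + 1), min (κ ^ (r - d) * W) (K * (κ ^ d) ^ (1 / q) * B) := by
        rw [sum_wsum_inter_sph_eq]
        refine sum_le_sum fun d _ => le_min (sum_sum_filter_le_pow_mul_wsum w E F r d) ?_
        rw [mul_sum]
        exact sum_le_sum fun x _ => sum_filter_le_mul_MsSph hk hpq w F x r d
    _ ≤ 2 * (1 - ((2 : ℝ≥0∞) ^ (1 / q))⁻¹)⁻¹ *
          ((κ ^ r) ^ α * K ^ (1 - α) * W ^ α * B ^ (1 - α)) :=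
        sum_min_pow_le (Nat.ofNat_le_cast.2 hk) hq.le K W B r
    _ ≤ 2 * (1 - ((2 : ℝ≥0∞) ^ (1 / q))⁻¹)⁻¹ *
          (2 * (κ ^ r) ^ (1 - α) * W ^ α * B ^ (1 - α)) := by
        gcongr
    _ = sphericalConst q * (κ ^ r) ^ (1 - α) * W ^ α * B ^ (1 - α) := by
        rw [sphericalConst]; ring

theorem ETk_le (hk : 2 ≤ k) {p q : ℝ} (hpq : p.HolderConjugate q) (w : V k → ℝ≥0∞) (r : ℕ) :
    ETk k w p r (1 / (q + 1)) ≤ sphericalConst q * (k : ℝ≥0∞) ^ (-(r : ℝ) / (q + 1)) := by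
  set κ : ℝ≥0∞ := (k : ℝ≥0∞)
  set α : ℝ := 1 / (q + 1)
  have hκ0 : κ ^ r ≠ 0 := pow_ne_zero r (by simp [κ]; omega)
  have hκt : κ ^ r ≠ ⊤ := ENNReal.pow_ne_top (ENNReal.natCast_ne_top k)
  have hdecay : (κ ^ r) ^ (1 - α) * (κ ^ r)⁻¹ = κ ^ (-(r : ℝ) / (q + 1)) := by
    rw [← ENNReal.rpow_neg_one, ← ENNReal.rpow_add _ _ hκ0 hκt, ← ENNReal.rpow_natCast,
      ← ENNReal.rpow_mul]
    congr 1; simp only [α]; ring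
  refine iSup₂_le fun E F => ENNReal.div_le_of_le_mul ?_
  calc ∑ x ∈ E, wsum w (↑F ∩ sph x r) / sphCard x r
      ≤ ∑ x ∈ E, wsum w (↑F ∩ sph x r) * (κ ^ r)⁻¹ := sum_le_sum fun x _ => by
        rw [← div_eq_mul_inv]; exact ENNReal.div_le_div_left (pow_le_sphCard x r) _
    _ = (∑ x ∈ E, wsum w (↑F ∩ sph x r)) * (κ ^ r)⁻¹ := (sum_mul ..).symm
    _ ≤ sphericalConst q * (κ ^ r) ^ (1 - α) * wsum w ↑F ^ α *
          (∑ x ∈ E, MsSph p w x) ^ (1 - α) * (κ ^ r)⁻¹ := by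
        gcongr; exact sum_wsum_inter_sph_le hk hpq w E F r
    _ = sphericalConst q * κ ^ (-(r : ℝ) / (q + 1)) *
          (wsum w ↑F ^ α * (∑ x ∈ E, MsSph p w x) ^ (1 - α)) := by
        rw [← hdecay]; ring

theorem ETk_rpow_mul_STk_rpow_le (hk : 2 ≤ k) {p q : ℝ} (hpq : p.HolderConjugate q)
    (w : V k → ℝ≥0∞) (r n : ℕ) :
    ETk k w p r (1 / (q + 1)) ^ ((q + 1) / q) * STk k r ^ (1 / (2 * q)) *
        2 ^ ((n : ℝ) * (1 / (2 * q))) ≤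
      sphericalConst q ^ ((q + 1) / q) * 2 ^ (1 / (2 * q)) *
        (2 ^ n / (k : ℝ≥0∞) ^ r) ^ (1 / (2 * q)) := by
  set κ : ℝ≥0∞ := (k : ℝ≥0∞)
  set t : ℝ := 1 / (2 * q)
  have hq : 0 < q := hpq.symm.pos
  have ht : 0 ≤ t := by positivity
  have hκ0 : κ ≠ 0 := by simp [κ]; omega
  have hκt : κ ≠ ⊤ := ENNReal.natCast_ne_top k
  have hE := ENNReal.rpow_le_rpow (ETk_le hk hpq w r) (by positivity : 0 ≤ (q + 1) / q)
  have hS := ENNReal.rpow_le_rpow (STk_le hk r) ht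
  have hexpE : -(r : ℝ) / (q + 1) * ((q + 1) / q) = -(r : ℝ) / q := by field_simp
  have hexpκ : -(r : ℝ) / q + r * t = -(r * t) := by simp only [t]; field_simp; ring
  calc ETk k w p r (1 / (q + 1)) ^ ((q + 1) / q) * STk k r ^ t * 2 ^ ((n : ℝ) * t)
      ≤ (sphericalConst q * κ ^ (-(r : ℝ) / (q + 1))) ^ ((q + 1) / q) * (2 * κ ^ r) ^ t *
          2 ^ ((n : ℝ) * t) := by gcongr
    _ = sphericalConst q ^ ((q + 1) / q) * 2 ^ t *
          (κ ^ (-(r : ℝ) / q + r * t) * 2 ^ ((n : ℝ) * t)) := by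
        rw [ENNReal.mul_rpow_of_nonneg _ _ (by positivity), ENNReal.mul_rpow_of_nonneg _ _ ht,
          ← ENNReal.rpow_mul, hexpE, ← ENNReal.rpow_natCast, ← ENNReal.rpow_mul,
          ENNReal.rpow_add _ _ hκ0 hκt]
        ring
    _ = sphericalConst q ^ ((q + 1) / q) * 2 ^ t * (2 ^ n / κ ^ r) ^ t := by
        rw [hexpκ, ENNReal.rpow_neg, ENNReal.div_rpow_of_nonneg _ _ ht,
          ← ENNReal.rpow_natCast (2 : ℝ≥0∞) n, ← ENNReal.rpow_natCast κ r, ← ENNReal.rpow_mul,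
          ← ENNReal.rpow_mul, ENNReal.div_eq_inv_mul]

end KaryTree

/-- For the `k`-ary tree with `α = 1/(s'+1)`, `s' = s/(s-1)`: `E_T^w(s,r,α) ≤ c_s k^{-r/(s'+1)}`,
`S_T(r) ≃ k^r`, and hence
`E_T^w(s,r,α)^{1/(1-α)} S_T(r)^{(1/2)α/(1-α)} 2^{n(1/2)α/(1-α)} ≲ c_s (2^n/k^r)^{1/(2s')}`. -/
theorem stmt19 (s : ℝ) (hs : 1 < s) :
    ∃ c : ℝ≥0, 0 < c ∧ ∀ (k : ℕ), 2 ≤ k → ∀ (w : V k → ℝ≥0∞) (r n : ℕ),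
      ETk k w s r (1 / (s / (s - 1) + 1)) ≤
          (c : ℝ≥0∞) * (k : ℝ≥0∞) ^ (-(r : ℝ) / (s / (s - 1) + 1)) ∧
      (k : ℝ≥0∞) ^ r ≤ STk k r ∧ STk k r ≤ (c : ℝ≥0∞) * (k : ℝ≥0∞) ^ r ∧
      (ETk k w s r (1 / (s / (s - 1) + 1))) ^
            ((1 : ℝ) / (1 - 1 / (s / (s - 1) + 1))) *
          (STk k r) ^ ((1 / 2 : ℝ) * ((1 / (s / (s - 1) + 1)) / (1 - 1 / (s / (s - 1) + 1)))) *
          (2 : ℝ≥0∞) ^ ((n : ℝ) * ((1 / 2) * ((1 / (s / (s - 1) + 1)) / (1 - 1 / (s / (s - 1) + 1))))) ≤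
        (c : ℝ≥0∞) * ((2 : ℝ≥0∞) ^ (n : ℕ) / (k : ℝ≥0∞) ^ r) ^ ((1 : ℝ) / (2 * (s / (s - 1)))) := by
  have hpq : s.HolderConjugate (s / (s - 1)) := Real.HolderConjugate.conjExponent hs
  set q := s / (s - 1)
  clear_value q
  have hq : 0 < q := hpq.symm.pos
  have hexp₁ : (1 : ℝ) / (1 - 1 / (q + 1)) = (q + 1) / q := by
    rw [one_sub_div (by positivity), one_div_div, add_sub_cancel_right]
  have hexp₂ : (1 / 2 : ℝ) * (1 / (q + 1) / (1 - 1 / (q + 1))) = 1 / (2 * q) := by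
    rw [one_sub_div (by positivity), add_sub_cancel_right,
      div_div_div_cancel_right₀ (by positivity)]
    ring
  set C := sphericalConst q
  set C' := C ^ ((q + 1) / q) * 2 ^ (1 / (2 * q))
  have hC : C ≠ ⊤ := sphericalConst_ne_top hq
  have hC' : C' ≠ ⊤ := ENNReal.mul_ne_top (ENNReal.rpow_ne_top_of_nonneg (by positivity) hC)
    (ENNReal.rpow_ne_top_of_nonneg (by positivity) (by simp))
  have htop : C + 2 + C' ≠ ⊤ := by simp [hC, hC']
  refine ⟨(C + 2 + C').toNNReal, ENNReal.toNNReal_pos (by simp) htop, fun k hk w r n => ?_⟩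
  rw [ENNReal.coe_toNNReal htop, hexp₁, hexp₂]
  refine ⟨(ETk_le hk hpq w r).trans ?_, pow_le_STk k r, (STk_le hk r).trans ?_,
    (ETk_rpow_mul_STk_rpow_le hk hpq w r n).trans ?_⟩ <;> gcongr
  exacts [le_add_right (le_add_right le_rfl), le_add_right le_add_self, le_add_self]
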